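/- arXiv:2308.07642 — 3 statements merged into one kernel-verified Lean document; each statement's English description precedes it below -/
import Mathlib

section
/- For all positive integers k and natural numbers n, the coefficient of x^n in C(x)^k, where C(x) is the generating function of the Catalan numbers, equals (k/(2n+k))·binom(2n+k, n), which also equals binom(2n+k-1, n) − binom(2n+k-1, n-1). -/
/-!
From `C = 1 + X C²` we get `C^(k+1) = C^k + X C^(k+2)`, so the coefficients of the powers of `C`
satisfy `[xⁿ⁺¹] C^(k+1) = [xⁿ⁺¹] C^k + [xⁿ] C^(k+2)`, with boundary values `[x⁰] C^k = 1` and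
`[xⁿ⁺¹] C⁰ = 0`. The ballot numbers `binom(2n+k-1, n) - binom(2n+k-1, n-1)` obey the same recurrence
by Pascal's rule, and `(2n+k)` times them is `k · binom(2n+k, n)` by absorption.
-/

open PowerSeries

def ballot (k : ℕ) : ℕ → ℤ
  | 0 => 1
  | n + 1 => (2 * n + k + 1).choose (n + 1) - (2 * n + k + 1).choose n

@[simp]
lemma ballot_zero_right (k : ℕ) : ballot k 0 = 1 := rfl

lemma ballot_zero_succ (n : ℕ) : ballot 0 (n + 1) = 0 := by
  rw [ballot, add_zero, ← Nat.choose_symm_half, sub_self]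

lemma ballot_succ_succ (k n : ℕ) :
    ballot (k + 1) (n + 1) = ballot k (n + 1) + ballot (k + 2) n := by
  cases n with
  | zero => simp [ballot, Nat.choose_one_right]
  | succ m =>
    have pascal₁ := Nat.choose_succ_succ' (2 * m + k + 3) (m + 1)
    have pascal₂ := Nat.choose_succ_succ' (2 * m + k + 3) m
    simp only [ballot, show 2 * (m + 1) + (k + 1) + 1 = 2 * m + k + 3 + 1 by ring,
      show 2 * (m + 1) + k + 1 = 2 * m + k + 3 by ring,
      show 2 * m + (k + 2) + 1 = 2 * m + k + 3 by ring, pascal₁, pascal₂]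
    push_cast
    ring

lemma ballot_eq_choose_sub_choose (k n : ℕ) :
    ballot k n =
      (2 * n + k - 1).choose n - if n = 0 then 0 else (2 * n + k - 1).choose (n - 1) := by
  cases n with
  | zero => simp
  | succ m => simp [ballot, show 2 * (m + 1) + k - 1 = 2 * m + k + 1 by omega]

lemma two_mul_add_mul_ballot (k n : ℕ) :
    ((2 * n + k : ℕ) : ℤ) * ballot k n = k * (2 * n + k).choose n := by
  cases n with
  | zero => simp
  | succ m =>
    have pascal := Nat.choose_succ_succ' (2 * m + k + 1) m
    have absorb := Nat.add_one_mul_choose_eq (2 * m + k + 1) m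
    rw [show 2 * (m + 1) + k = 2 * m + k + 1 + 1 by ring, ballot]
    zify at pascal absorb
    push_cast
    linear_combination (-(2 * (m : ℤ) + k + 2)) * pascal - 2 * absorb

lemma catalanSeries_pow_succ (k : ℕ) :
    catalanSeries ^ (k + 1) = catalanSeries ^ k + X * catalanSeries ^ (k + 2) := by
  calc catalanSeries ^ (k + 1) = catalanSeries ^ k * (catalanSeries ^ 2 * X + 1) := by
        rw [catalanSeries_sq_mul_X_add_one, pow_succ]
    _ = catalanSeries ^ k + X * catalanSeries ^ (k + 2) := by ring

theorem coeff_catalanSeries_pow (k n : ℕ) :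
    ((coeff n (catalanSeries ^ k) : ℕ) : ℤ) = ballot k n := by
  induction n generalizing k with
  | zero => simp
  | succ n ih =>
    induction k with
    | zero => simp [ballot_zero_succ]
    | succ k ihk =>
      rw [catalanSeries_pow_succ, map_add, coeff_succ_X_mul, Nat.cast_add, ihk, ih,
        ballot_succ_succ]

/-- For all positive integers `k` and natural numbers `n`, the coefficient of
`x^n` in `C(x)^k`, where `C(x)` is the generating function of the Catalan numbers, equals
`(k/(2n+k)) * binom(2n+k, n)`, which also equals
`binom(2n+k-1, n) - binom(2n+k-1, n-1)` (with `binom(m, -1) = 0`). -/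
theorem stmt0 (k n : ℕ) (hk : 1 ≤ k) :
    (PowerSeries.coeff (R := ℚ) n) ((PowerSeries.mk fun j => (catalan j : ℚ)) ^ k) =
      (k : ℚ) / (2 * n + k) * ((2 * n + k).choose n) ∧
    (PowerSeries.coeff (R := ℚ) n) ((PowerSeries.mk fun j => (catalan j : ℚ)) ^ k) =
      ((2 * n + k - 1).choose n : ℚ) -
        (if n = 0 then 0 else ((2 * n + k - 1).choose (n - 1) : ℚ)) := by
  have hcoeff : coeff n ((mk fun j => (catalan j : ℚ)) ^ k) = (ballot k n : ℚ) := by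
    rw [show (mk fun j => (catalan j : ℚ)) = map (Nat.castRingHom ℚ) catalanSeries by ext; simp,
      ← map_pow, coeff_map, ← coeff_catalanSeries_pow]
    simp
  have hden : (2 * n + k : ℚ) ≠ 0 := by positivity
  have hballot : ((2 * n + k : ℕ) : ℚ) * ballot k n = k * (2 * n + k).choose n := by
    exact_mod_cast two_mul_add_mul_ballot k n
  refine ⟨?_, ?_⟩
  · rw [hcoeff, div_mul_eq_mul_div, eq_div_iff hden, ← hballot]
    push_cast
    ring
  · rw [hcoeff, ballot_eq_choose_sub_choose]
    push_cast
    rfl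
end

section
/- For every positive integer n, the n×n Hankel determinant det(C_{i+j})_{i,j=0}^{n-1} of the Catalan numbers equals 1. -/
open Finset Matrix

private def bq (i k : ℕ) : ℚ :=
  (Nat.choose (2*i) (i+k) : ℚ) - (Nat.choose (2*i) (i+k+1) : ℚ)

private lemma chooseQ_eq_zero {n k : ℕ} (h : n < k) : (Nat.choose n k : ℚ) = 0 := by
  rw [Nat.choose_eq_zero_of_lt h]; norm_num

private lemma sum_trunc (f : ℕ → ℚ) {M N : ℕ} (h : M ≤ N)
    (h0 : ∀ k, M ≤ k → f k = 0) :
    ∑ k ∈ range N, f k = ∑ k ∈ range M, f k := by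
  refine (Finset.sum_subset (Finset.range_subset_range.2 h) ?_).symm
  intro k _ hk'
  exact h0 k (le_of_not_gt fun hlt => hk' (Finset.mem_range.2 hlt))

private lemma catalanQ (T : ℕ) :
    (catalan T : ℚ) = (Nat.choose (2*T) T : ℚ) - Nat.choose (2*T) (T+1) := by
  have h1 : ((T:ℚ)+1) * catalan T = Nat.choose (2*T) T := by
    have := succ_mul_catalan_eq_centralBinom T
    rw [Nat.centralBinom] at this
    exact_mod_cast congrArg (Nat.cast : ℕ → ℚ) this
  have h2 : (Nat.choose (2*T) (T+1) : ℚ) * ((T:ℚ)+1) = (Nat.choose (2*T) T : ℚ) * T := by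
    have h := Nat.choose_succ_right_eq (2*T) T
    rw [show 2*T - T = T by omega] at h
    exact_mod_cast congrArg (Nat.cast : ℕ → ℚ) h
  have hT : ((T:ℚ)+1) ≠ 0 := by positivity
  refine mul_left_cancel₀ hT ?_
  linear_combination h1 + h2

private lemma keyQ (N i j : ℕ) (hi : i ≤ N) (hj : j ≤ N) :
    ∑ k ∈ range (N+1), bq i k * bq j k = (catalan (i+j) : ℚ) := by
  set p : ℕ → ℚ := fun a => ((2*i).choose a : ℚ) with hp
  set q : ℕ → ℚ := fun b => ((2*j).choose b : ℚ) with hq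
  have psymm : ∀ k, k ≤ i → p (i - k) = p (i + k) := by
    intro k hk
    show ((2*i).choose (i-k) : ℚ) = ((2*i).choose (i+k) : ℚ)
    rw [show i - k = 2*i - (i+k) by omega, Nat.choose_symm (by omega)]
  have qsymm : ∀ k, k ≤ j → q (j - k) = q (j + k) := by
    intro k hk
    show ((2*j).choose (j-k) : ℚ) = ((2*j).choose (j+k) : ℚ)
    rw [show j - k = 2*j - (j+k) by omega, Nat.choose_symm (by omega)]
  have pzero : ∀ a, 2*i < a → p a = 0 := fun a ha => chooseQ_eq_zero ha
  have qzero : ∀ b, 2*j < b → q b = 0 := fun b hb => chooseQ_eq_zero hb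
  -- Vandermonde
  have hVan : ∀ m : ℕ, ((2*i + 2*j).choose m : ℚ) = ∑ a ∈ range (m+1), p a * q (m - a) := by
    intro m
    rw [Nat.add_choose_eq, Finset.Nat.sum_antidiagonal_eq_sum_range_succ_mk]
    push_cast
    rfl
  -- split F
  have hF : ((2*i + 2*j).choose (i+j) : ℚ)
      = ∑ k ∈ range (i+1), p (i+k) * q (j+k) + ∑ k ∈ range j, p (i+k+1) * q (j+k+1) := by
    rw [hVan, show i+j+1 = (i+1) + j by ring, Finset.sum_range_add]
    congr 1
    · rw [← Finset.sum_range_reflect]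
      refine Finset.sum_congr rfl fun k hk => ?_
      have hk' : k ≤ i := by have := Finset.mem_range.1 hk; omega
      rw [show i + 1 - 1 - k = i - k by omega,
        show i + j - (i - k) = j + k by omega, psymm k hk']
    · refine Finset.sum_congr rfl fun k hk => ?_
      have hk' : k < j := Finset.mem_range.1 hk
      rw [show i + j - (i + 1 + k) = j - (k+1) by omega, qsymm (k+1) (by omega),
        show i + 1 + k = i + k + 1 by ring, show j + (k+1) = j + k + 1 by ring]
  have hF' : ((2*i + 2*j).choose (i+j+1) : ℚ)
      = ∑ k ∈ range (i+1), p (i+k) * q (j+k+1) + ∑ k ∈ range (j+1), p (i+k+1) * q (j+k) := by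
    rw [hVan, show i+j+1+1 = (i+1) + (j+1) by ring, Finset.sum_range_add]
    congr 1
    · rw [← Finset.sum_range_reflect]
      refine Finset.sum_congr rfl fun k hk => ?_
      have hk' : k ≤ i := by have := Finset.mem_range.1 hk; omega
      rw [show i + 1 - 1 - k = i - k by omega,
        show i + j + 1 - (i - k) = j + k + 1 by omega, psymm k hk']
    · refine Finset.sum_congr rfl fun k hk => ?_
      have hk' : k ≤ j := by have := Finset.mem_range.1 hk; omega
      rw [show i + j + 1 - (i + 1 + k) = j - k by omega, qsymm k hk',
        show i + 1 + k = i + k + 1 by ring]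
  -- truncations
  have A1 : ∑ k ∈ range (N+1), p (i+k) * q (j+k) = ∑ k ∈ range (i+1), p (i+k) * q (j+k) :=
    sum_trunc _ (by omega) (fun k hk => by rw [pzero (i+k) (by omega)]; ring)
  have A2 : ∑ k ∈ range (N+1), p (i+k) * q (j+k+1) = ∑ k ∈ range (i+1), p (i+k) * q (j+k+1) :=
    sum_trunc _ (by omega) (fun k hk => by rw [pzero (i+k) (by omega)]; ring)
  have A3 : ∑ k ∈ range (N+1), p (i+k+1) * q (j+k) = ∑ k ∈ range (j+1), p (i+k+1) * q (j+k) :=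
    sum_trunc _ (by omega) (fun k hk => by rw [qzero (j+k) (by omega)]; ring)
  have A4 : ∑ k ∈ range (N+1), p (i+k+1) * q (j+k+1) = ∑ k ∈ range j, p (i+k+1) * q (j+k+1) :=
    sum_trunc _ (by omega) (fun k hk => by rw [qzero (j+k+1) (by omega)]; ring)
  have expand : ∑ k ∈ range (N+1), bq i k * bq j k
      = ∑ k ∈ range (N+1), p (i+k) * q (j+k)
        - ∑ k ∈ range (N+1), p (i+k) * q (j+k+1)
        - ∑ k ∈ range (N+1), p (i+k+1) * q (j+k)
        + ∑ k ∈ range (N+1), p (i+k+1) * q (j+k+1) := by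
    rw [← Finset.sum_sub_distrib, ← Finset.sum_sub_distrib, ← Finset.sum_add_distrib]
    refine Finset.sum_congr rfl fun k _ => ?_
    simp only [bq, hp, hq]
    ring
  rw [catalanQ, show 2*(i+j) = 2*i + 2*j by ring, hF, hF', expand, A1, A2, A3, A4]
  ring

private lemma keyQ' (n i j : ℕ) (hi : i < n) (hj : j < n) :
    ∑ k ∈ range n, bq i k * bq j k = (catalan (i+j) : ℚ) := by
  obtain ⟨N, rfl⟩ : ∃ N, n = N+1 := ⟨n-1, by omega⟩
  exact keyQ N i j (by omega) (by omega)

private lemma bq_diag (i : ℕ) : bq i i = 1 := by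
  rw [bq, show i + i = 2*i by ring, Nat.choose_self,
    Nat.choose_eq_zero_of_lt (by omega : 2*i < 2*i+1)]
  norm_num

private lemma bq_zero {i k : ℕ} (h : i < k) : bq i k = 0 := by
  rw [bq, Nat.choose_eq_zero_of_lt (by omega : 2*i < i+k),
    Nat.choose_eq_zero_of_lt (by omega : 2*i < i+k+1)]
  norm_num

/-- For every positive integer `n`, the `n × n` Hankel determinant
`det (C_{i+j})_{i,j=0}^{n-1}` of the Catalan numbers equals `1`. -/
theorem stmt2 (n : ℕ) (hn : 1 ≤ n) :
    Matrix.det (Matrix.of fun i j : Fin n => (catalan (i + j) : ℚ)) = 1 := by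
  set L : Matrix (Fin n) (Fin n) ℚ := Matrix.of (fun i k : Fin n => bq i k) with hL
  have hM : (Matrix.of fun i j : Fin n => (catalan (i + j) : ℚ)) = L * Lᵀ := by
    ext i j
    rw [Matrix.mul_apply]
    simp only [hL, Matrix.transpose_apply, Matrix.of_apply]
    rw [Fin.sum_univ_eq_sum_range (fun k => bq i k * bq j k) n]
    exact (keyQ' n i j i.isLt j.isLt).symm
  have ht : L.BlockTriangular OrderDual.toDual := by
    intro i j hij
    have hij' : (i : ℕ) < (j : ℕ) := hij
    simpa [hL] using bq_zero hij'
  have hdet : L.det = 1 := by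
    rw [Matrix.det_of_lowerTriangular L ht]
    simp [hL, bq_diag]
  rw [hM, Matrix.det_mul, Matrix.det_transpose, hdet]
  norm_num
end

section
/- For every positive integer n, the n×n Hankel determinant det(C_{i+j+1})_{i,j=0}^{n-1} of the shifted Catalan numbers equals 1. -/
/-- `pp n k` = number of nonnegative lattice paths of length `n` from `0` to `k`. -/
def pp : ℕ → ℕ → ℕ
  | 0, 0 => 1
  | 0, _+1 => 0
  | n+1, 0 => pp n 1
  | n+1, k+1 => pp n k + pp n (k+2)

@[simp] lemma pp_zero_zero : pp 0 0 = 1 := rfl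
@[simp] lemma pp_zero_succ (k : ℕ) : pp 0 (k+1) = 0 := rfl
@[simp] lemma pp_succ_zero (n : ℕ) : pp (n+1) 0 = pp n 1 := rfl
@[simp] lemma pp_succ_succ (n k : ℕ) : pp (n+1) (k+1) = pp n k + pp n (k+2) := rfl

lemma pp_eq_zero_of_lt : ∀ n k, n < k → pp n k = 0 := by
  intro n
  induction n with
  | zero => intro k h; match k, h with | k+1, _ => rfl
  | succ n ih =>
    intro k h
    match k, h with
    | k+1, h =>
      rw [pp_succ_succ, ih k (by omega), ih (k+2) (by omega)]

lemma pp_self : ∀ n, pp n n = 1 := by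
  intro n
  induction n with
  | zero => rfl
  | succ n ih => rw [pp_succ_succ, ih, pp_eq_zero_of_lt n (n+2) (by omega)]

lemma pp_eq_zero_of_odd : ∀ n k, (n + k) % 2 = 1 → pp n k = 0 := by
  intro n
  induction n with
  | zero =>
    intro k h
    match k, h with | k+1, _ => rfl
  | succ n ih =>
    intro k h
    match k with
    | 0 => rw [pp_succ_zero]; exact ih 1 (by omega)
    | k+1 => rw [pp_succ_succ, ih k (by omega), ih (k+2) (by omega)]

open Finset in
lemma pp_step (n m M : ℕ) (hn : n ≤ M) :
    ∑ k ∈ range (M+1), pp (n+1) k * pp m k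
      = ∑ k ∈ range M, (pp n k * pp m (k+1) + pp n (k+1) * pp m k) := by
  rw [Finset.sum_range_succ' (fun k => pp (n+1) k * pp m k) M]
  simp only [pp_succ_succ, pp_succ_zero, add_mul]
  have h1 : ∑ k ∈ range M, pp n (k+2) * pp m (k+1) + pp n 1 * pp m 0
      = ∑ k ∈ range (M+1), pp n (k+1) * pp m k := by
    rw [Finset.sum_range_succ' (fun k => pp n (k+1) * pp m k) M]
  have h2 : ∑ k ∈ range (M+1), pp n (k+1) * pp m k
      = ∑ k ∈ range M, pp n (k+1) * pp m k := by
    rw [Finset.sum_range_succ, pp_eq_zero_of_lt n (M+1) (by omega)]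
    simp
  rw [Finset.sum_add_distrib, add_assoc, h1, h2, ← Finset.sum_add_distrib]

open Finset in
lemma pp_swap (n m M : ℕ) (hn : n ≤ M) (hm : m ≤ M) :
    ∑ k ∈ range (M+1), pp (n+1) k * pp m k
      = ∑ k ∈ range (M+1), pp n k * pp (m+1) k := by
  rw [pp_step n m M hn]
  have := pp_step m n M hm
  rw [show (∑ k ∈ range (M+1), pp n k * pp (m+1) k)
      = ∑ k ∈ range (M+1), pp (m+1) k * pp n k by
    exact Finset.sum_congr rfl fun k _ => mul_comm _ _, this]
  exact Finset.sum_congr rfl fun k _ => by ring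

open Finset in
lemma pp_sum_eq : ∀ n m M : ℕ, n + m ≤ M →
    ∑ k ∈ range (M+1), pp n k * pp m k = pp (n + m) 0 := by
  intro n
  induction n with
  | zero =>
    intro m M h
    rw [Finset.sum_eq_single 0]
    · simp
    · intro b _ hb
      match b, hb with
      | b+1, _ => simp
    · intro h; simp at h
  | succ n ih =>
    intro m M h
    rw [pp_swap n m M (by omega) (by omega), ih (m+1) M (by omega)]
    congr 1
    omega

lemma pp_closed : ∀ n k : ℕ, (n + k) % 2 = 0 →
    (pp n k : ℤ) = (n.choose ((n+k)/2) : ℤ) - n.choose ((n+k)/2+1) := by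
  intro n
  induction n with
  | zero =>
    intro k h
    match k with
    | 0 => simp
    | k+1 =>
      have hk : (0+(k+1))/2 ≥ 1 := by omega
      rw [pp_zero_succ, Nat.choose_eq_zero_of_lt (by omega), Nat.choose_eq_zero_of_lt (by omega)]
      simp
  | succ n ih =>
    intro k h
    match k with
    | 0 =>
      -- n+1 even, set u = (n+1)/2 ≥ 1, n = 2u-1
      have hu : ∃ u, n + 1 = 2 * u ∧ 1 ≤ u := ⟨(n+1)/2, by omega, by omega⟩
      obtain ⟨u, hnu, hu1⟩ := hu
      have h1 : ((n+1)+0)/2 = u := by omega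
      rw [pp_succ_zero, ih 1 (by omega), h1]
      obtain ⟨v, rfl⟩ : ∃ v, u = v + 1 := ⟨u-1, by omega⟩
      have e1 : (n+1).choose (v+1) = n.choose v + n.choose (v+1) :=
        Nat.choose_succ_succ' n v
      have e2 : (n+1).choose (v+1+1) = n.choose (v+1) + n.choose (v+2) :=
        Nat.choose_succ_succ' n (v+1)
      have e3 : n.choose v = n.choose (v+1) := by
        have hh : n - (v+1) = v := by omega
        rw [← Nat.choose_symm (show v+1 ≤ n by omega), hh]
      push_cast [e1, e2, e3]
      ring
    | k+1 =>
      have hp : (n + k) % 2 = 0 := by omega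
      have h1 : (n+1+(k+1))/2 = (n+k)/2 + 1 := by omega
      have h2 : (n+(k+2))/2 = (n+k)/2 + 1 := by omega
      rw [pp_succ_succ, Nat.cast_add, ih k hp, ih (k+2) (by omega), h1, h2]
      have e1 : (n+1).choose ((n+k)/2+1) = n.choose ((n+k)/2) + n.choose ((n+k)/2+1) :=
        Nat.choose_succ_succ' n _
      have e2 : (n+1).choose ((n+k)/2+1+1) = n.choose ((n+k)/2+1) + n.choose ((n+k)/2+2) :=
        Nat.choose_succ_succ' n _
      push_cast [e1, e2]
      ring

lemma pp_two_mul (n : ℕ) : pp (2*n) 0 = catalan n := by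
  have h := pp_closed (2*n) 0 (by omega)
  have h2 : (2*n+0)/2 = n := by omega
  rw [h2] at h
  have key : ((n:ℤ)+1) * ((2*n).choose n - (2*n).choose (n+1)) = ((n:ℤ)+1) * catalan n := by
    have e1 : (2*n).choose (n+1) * (n+1) = (2*n).choose n * n := by
      have := Nat.choose_succ_right_eq (2*n) n
      rwa [show 2*n - n = n by omega] at this
    have e2 : (n+1) * catalan n = (2*n).choose n := by
      rw [succ_mul_catalan_eq_centralBinom, Nat.centralBinom]
    have e1' : ((2*n).choose (n+1) : ℤ) * (n+1) = (2*n).choose n * n := by exact_mod_cast e1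
    have e2' : ((n:ℤ)+1) * catalan n = (2*n).choose n := by exact_mod_cast e2
    rw [e2']
    linarith
  have hne : ((n:ℤ)+1) ≠ 0 := by positivity
  have hz : ((2*n).choose n : ℤ) - (2*n).choose (n+1) = catalan n :=
    mul_left_cancel₀ hne key
  have : ((pp (2*n) 0 : ℤ)) = catalan n := by rw [h, hz]
  exact_mod_cast this

open Finset in
lemma sum_double (f : ℕ → ℕ) : ∀ M, ∑ k ∈ range (2*M), f k = ∑ t ∈ range M, (f (2*t) + f (2*t+1)) := by
  intro M
  induction M with
  | zero => simp
  | succ M ih =>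
    rw [show 2*(M+1) = (2*M+1)+1 by ring, Finset.sum_range_succ, Finset.sum_range_succ,
      ih, Finset.sum_range_succ, add_assoc]

open Finset in
lemma sum_pp_ext (i j : ℕ) : ∀ N, i < N →
    ∑ t ∈ range N, pp (2*i+1) (2*t+1) * pp (2*j+1) (2*t+1)
      = ∑ t ∈ range (i+1), pp (2*i+1) (2*t+1) * pp (2*j+1) (2*t+1) := by
  intro N hN
  symm
  apply Finset.sum_subset (Finset.range_subset_range.mpr (by omega))
  intro t ht hnt
  simp only [Finset.mem_range] at ht hnt
  rw [pp_eq_zero_of_lt (2*i+1) (2*t+1) (by omega), zero_mul]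

open Finset in
lemma hankel (i j n : ℕ) (hi : i < n) (hj : j < n) :
    ∑ t ∈ range n, pp (2*i+1) (2*t+1) * pp (2*j+1) (2*t+1) = catalan (i+j+1) := by
  rw [sum_pp_ext i j n hi, ← sum_pp_ext i j (i+j+2) (by omega)]
  have h1 := pp_sum_eq (2*i+1) (2*j+1) (2*i+2*j+3) (by omega)
  rw [show 2*i+2*j+3+1 = 2*(i+j+2) by ring] at h1
  rw [sum_double (fun k => pp (2*i+1) k * pp (2*j+1) k) (i+j+2)] at h1
  have h2 : ∀ t, pp (2*i+1) (2*t) * pp (2*j+1) (2*t) = 0 := by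
    intro t
    rw [pp_eq_zero_of_odd (2*i+1) (2*t) (by omega), zero_mul]
  simp only [h2, zero_add] at h1
  rw [h1, show 2*i+1+(2*j+1) = 2*(i+j+1) by ring, pp_two_mul]

/-- For every positive integer `n`, the `n × n` Hankel determinant
`det (C_{i+j+1})_{i,j=0}^{n-1}` of the shifted Catalan numbers equals `1`. -/
theorem stmt3 (n : ℕ) (hn : 1 ≤ n) :
    Matrix.det (Matrix.of fun i j : Fin n => (catalan (i + j + 1) : ℚ)) = 1 := by
  set L : Matrix (Fin n) (Fin n) ℚ :=
    Matrix.of (fun i k : Fin n => (pp (2*(i:ℕ)+1) (2*(k:ℕ)+1) : ℚ)) with hL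
  have hM : (Matrix.of fun i j : Fin n => (catalan (i + j + 1) : ℚ)) = L * L.transpose := by
    ext i j
    rw [Matrix.mul_apply]
    simp only [hL, Matrix.of_apply, Matrix.transpose_apply]
    rw [Fin.sum_univ_eq_sum_range (fun k => ((pp (2*(i:ℕ)+1) (2*k+1) : ℚ)) * pp (2*(j:ℕ)+1) (2*k+1)) n]
    rw [← hankel i j n i.isLt j.isLt]
    push_cast
    rfl
  have hLdet : L.det = 1 := by
    rw [Matrix.det_of_lowerTriangular L (by
      intro i j hij
      simp only [hL, Matrix.of_apply]
      rw [pp_eq_zero_of_lt _ _ (by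
        have : (i:ℕ) < (j:ℕ) := hij
        omega)]
      simp)]
    rw [Finset.prod_eq_one]
    intro i _
    simp only [hL, Matrix.of_apply, pp_self, Nat.cast_one]
  rw [hM, Matrix.det_mul, Matrix.det_transpose, hLdet]
  norm_num
end
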